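/- Let n ≥ 1 and for each 1 ≤ k ≤ n let r^{(k)} be an n×n unitary matrix such that r^{(k)} e_j = e_j for all 1 ≤ j ≤ k−1 and such that r^{(k)} − Id has rank at most 1. Then det(Id − r^{(1)} r^{(2)} ⋯ r^{(n)}) = ∏_{k=1}^{n} (1 − r^{(k)}_{kk}), where r^{(k)}_{kk} = ⟨e_k, r^{(k)} e_k⟩. -/

import Mathlib

open Matrix

private lemma rank_le_one_decomp {m : ℕ} (B : Matrix (Fin m) (Fin m) ℂ) (h : B.rank ≤ 1) :
    ∃ x y : Fin m → ℂ, ∀ i j, B i j = x i * y j := by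
  rw [Matrix.rank] at h
  obtain ⟨v, hv⟩ := finrank_le_one_iff.mp h
  choose c hc using fun j : Fin m =>
    hv ⟨B *ᵥ Pi.single j 1, ⟨Pi.single j 1, rfl⟩⟩
  refine ⟨fun i => (v : Fin m → ℂ) i, c, fun i j => ?_⟩
  have := congrArg (fun w : LinearMap.range B.mulVecLin => (w : Fin m → ℂ) i) (hc j)
  simp only [SetLike.val_smul, Pi.smul_apply, smul_eq_mul, mulVec_single, mul_one] at this
  rw [mul_comm]; simpa [Matrix.col] using this.symm

private lemma key_step {n : ℕ} (A Q : Matrix (Fin (n+1)) (Fin (n+1)) ℂ)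
    (x y : Fin (n+1) → ℂ)
    (hA : ∀ i j, A i j = (if i = j then (1:ℂ) else 0) + x i * y j)
    (hQc : ∀ i, Q i 0 = if i = 0 then 1 else 0)
    (hQr : ∀ j, Q 0 j = if j = 0 then 1 else 0) :
    det (1 - A * Q) = (1 - A 0 0) * det (1 - Q.submatrix Fin.succ Fin.succ) := by
  set w : Fin (n+1) → ℂ := fun j => ∑ l, y l * Q l j with hw
  set D : Matrix (Fin (n+1)) (Fin (n+1)) ℂ := 1 - Q with hD
  have hM : ∀ i j, (1 - A * Q) i j = D i j - x i * w j := by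
    intro i j
    simp only [hD, Matrix.sub_apply, Matrix.mul_apply, hw]
    have : ∑ l, A i l * Q l j = Q i j + x i * ∑ l, y l * Q l j := by
      simp only [hA, add_mul, Finset.sum_add_distrib, Finset.mul_sum]
      congr 1
      · simp [ite_mul]
      · exact Finset.sum_congr rfl fun l _ => by ring
    rw [this]; ring
  have hD0c : ∀ i, D i 0 = 0 := by
    intro i; simp [hD, Matrix.sub_apply, Matrix.one_apply, hQc i]
  have hD0r : ∀ j, D 0 j = 0 := by
    intro j; simp [hD, Matrix.sub_apply, Matrix.one_apply, hQr j, eq_comm]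
  set P : Matrix (Fin (n+1)) (Fin (n+1)) ℂ := updateCol D 0 x with hP
  set T : Matrix (Fin (n+1)) (Fin (n+1)) ℂ :=
    Matrix.of fun i j => if i = j then (1:ℂ) else if i = 0 then -(w j) else 0 with hT
  have hPT : P * T = updateCol (1 - A * Q) 0 x := by
    ext i j
    rw [Matrix.mul_apply, Fin.sum_univ_succ]
    rcases Fin.eq_zero_or_eq_succ j with rfl | ⟨j', rfl⟩
    · have hTl : ∀ l : Fin n, T l.succ 0 = 0 := fun l => by
        simp [hT, Fin.succ_ne_zero]
      have hT0 : T 0 0 = (1:ℂ) := by simp [hT]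
      simp only [hTl, hT0, mul_one, mul_zero, Finset.sum_const_zero, add_zero,
        updateCol_apply, if_pos rfl]
      simp [hP]
    · have hT0 : T 0 j'.succ = -(w j'.succ) := by
        simp [hT, (Fin.succ_ne_zero j').symm]
      have hTl : ∀ l : Fin n, T l.succ j'.succ = if l = j' then 1 else 0 := fun l => by
        simp [hT, Fin.succ_inj, Fin.succ_ne_zero]
      have hP0 : P i 0 = x i := by simp [hP]
      have hPl : ∀ l : Fin n, P i l.succ = D i l.succ := fun l => by
        simp [hP, Fin.succ_ne_zero]
      simp only [hT0, hTl, hP0, hPl, mul_ite, mul_one, mul_zero,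
        Finset.sum_ite_eq' Finset.univ, Finset.mem_univ, if_true,
        updateCol_apply, if_neg (Fin.succ_ne_zero j'), hM]
      ring
  have hdetT : det T = 1 := by
    rw [Matrix.det_of_upperTriangular]
    · simp [hT, Matrix.of_apply]
    · intro i j hij
      simp only [hT, Matrix.of_apply]
      rw [if_neg (by exact fun h => absurd h (by simpa using hij.ne')),
        if_neg (by rintro rfl; exact absurd hij (by simp))]
  have hcol0 : ∀ i, (1 - A * Q) i 0 = (-(w 0)) * x i := by
    intro i; rw [hM, hD0c]; ring
  have step1 : det (1 - A * Q) = (-(w 0)) * det (updateCol (1 - A * Q) 0 x) := by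
    nth_rewrite 1 [show (1 - A * Q) = updateCol (1 - A * Q) 0 ((-(w 0)) • x) by
      ext i j
      rw [updateCol_apply]
      split
      · next h => subst h; rw [hcol0]; simp
      · rfl]
    rw [det_updateCol_smul]
  have hPsub : P.submatrix Fin.succ Fin.succ = 1 - Q.submatrix Fin.succ Fin.succ := by
    ext i j
    simp only [submatrix_apply, hP, updateCol_apply, if_neg (Fin.succ_ne_zero j),
      hD, Matrix.sub_apply, Matrix.one_apply, Fin.succ_inj]
  have hdetP : det P = x 0 * det (1 - Q.submatrix Fin.succ Fin.succ) := by
    rw [det_succ_row_zero, Fin.sum_univ_succ]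
    have hz : ∀ j : Fin n, ((-1:ℂ)) ^ ((j.succ : Fin (n+1)) : ℕ) * P 0 j.succ
        * det (P.submatrix Fin.succ j.succ.succAbove) = 0 := by
      intro j
      rw [hP, updateCol_apply, if_neg (Fin.succ_ne_zero j), hD0r]
      ring
    rw [Finset.sum_congr rfl (fun j _ => hz j), Finset.sum_const, smul_zero, add_zero]
    simp only [Fin.val_zero, pow_zero, one_mul, hP, updateCol_apply, if_pos rfl,
      Fin.succAbove_zero]
    rw [← hP, hPsub]; simp
  have hw0 : w 0 = y 0 := by
    simp [hw, hQc, mul_ite, mul_one, mul_zero]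
  have hA00 : 1 - A 0 0 = -(w 0) * x 0 := by
    rw [hA, hw0]; simp; ring
  rw [step1, ← hPT, det_mul, hdetT, mul_one, hdetP, hA00]
  ring

private lemma fix0_prod {n : ℕ} (L : List (Matrix (Fin (n+1)) (Fin (n+1)) ℂ))
    (h : ∀ M ∈ L, (∀ i, M i 0 = if i = 0 then (1:ℂ) else 0) ∧
      (∀ j, M 0 j = if j = 0 then (1:ℂ) else 0)) :
    (∀ i, L.prod i 0 = if i = 0 then (1:ℂ) else 0) ∧
      (∀ j, L.prod 0 j = if j = 0 then (1:ℂ) else 0) := by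
  induction L with
  | nil =>
    constructor <;> intro i <;> simp [Matrix.one_apply, eq_comm]
  | cons M L ih =>
    obtain ⟨hc, hr⟩ := ih (fun N hN => h N (List.mem_cons_of_mem _ hN))
    obtain ⟨hMc, hMr⟩ := h M (List.mem_cons_self)
    rw [List.prod_cons]
    constructor
    · intro i
      rw [Matrix.mul_apply]
      rw [Finset.sum_congr rfl (fun l _ => by rw [hc l])]
      simp only [mul_ite, mul_one, mul_zero, Finset.sum_ite_eq' Finset.univ,
        Finset.mem_univ, if_true]
      exact hMc i
    · intro j
      rw [Matrix.mul_apply]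
      rw [Finset.sum_congr rfl (fun l _ => by rw [hMr l])]
      simp only [ite_mul, one_mul, zero_mul, Finset.sum_ite_eq' Finset.univ,
        Finset.mem_univ, if_true]
      exact hr j

private lemma submatrix_prod {n : ℕ} (L : List (Matrix (Fin (n+1)) (Fin (n+1)) ℂ))
    (h : ∀ M ∈ L, ∀ i, M i 0 = if i = 0 then (1:ℂ) else 0) :
    L.prod.submatrix Fin.succ Fin.succ
      = (L.map (fun M => M.submatrix Fin.succ Fin.succ)).prod := by
  induction L with
  | nil => ext i j; simp [Matrix.one_apply, Fin.succ_inj]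
  | cons M L ih =>
    simp only [List.prod_cons, List.map_cons]
    rw [← ih (fun N hN => h N (List.mem_cons_of_mem _ hN))]
    ext i j
    rw [submatrix_apply, Matrix.mul_apply, Matrix.mul_apply, Fin.sum_univ_succ,
      h M (List.mem_cons_self) i.succ]
    simp [Fin.succ_ne_zero]
private theorem aux (n : ℕ) (r : Fin n → Matrix (Fin n) (Fin n) ℂ)
    (hrk : ∀ k, ∃ x y : Fin n → ℂ, ∀ i j,
      r k i j = (if i = j then (1:ℂ) else 0) + x i * y j)
    (hcol : ∀ k j : Fin n, j < k → ∀ i, r k i j = if i = j then 1 else 0)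
    (hrow : ∀ k i : Fin n, i < k → ∀ j, r k i j = if j = i then 1 else 0) :
    det (1 - ((List.finRange n).map r).prod) = ∏ k : Fin n, (1 - r k k k) := by
  induction n with
  | zero => simp
  | succ n ih =>
    rw [List.finRange_succ, List.map_cons, List.prod_cons, List.map_map]
    set L : List (Matrix (Fin (n+1)) (Fin (n+1)) ℂ) :=
      (List.finRange n).map (r ∘ Fin.succ) with hL
    have hmem : ∀ M ∈ L, (∀ i, M i 0 = if i = 0 then (1:ℂ) else 0) ∧
        (∀ j, M 0 j = if j = 0 then (1:ℂ) else 0) := by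
      intro M hM
      simp only [hL, List.mem_map, Function.comp_apply] at hM
      obtain ⟨k, -, rfl⟩ := hM
      exact ⟨fun i => hcol k.succ 0 (Fin.succ_pos k) i,
        fun j => hrow k.succ 0 (Fin.succ_pos k) j⟩
    obtain ⟨hc, hr⟩ := fix0_prod L hmem
    obtain ⟨x, y, hxy⟩ := hrk 0
    rw [key_step (r 0) L.prod x y hxy hc hr]
    set r' : Fin n → Matrix (Fin n) (Fin n) ℂ :=
      fun k => (r k.succ).submatrix Fin.succ Fin.succ with hr'
    have hsub : L.prod.submatrix Fin.succ Fin.succ = ((List.finRange n).map r').prod := by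
      rw [submatrix_prod L (fun M hM => (hmem M hM).1), hL, List.map_map]
      rfl
    rw [hsub, ih r' ?_ ?_ ?_, Fin.prod_univ_succ]
    · rfl
    · intro k
      obtain ⟨x', y', h'⟩ := hrk k.succ
      refine ⟨x' ∘ Fin.succ, y' ∘ Fin.succ, fun i j => ?_⟩
      simp only [hr', submatrix_apply, h', Function.comp_apply, Fin.succ_inj]
    · intro k j hjk i
      simp only [hr', submatrix_apply,
        hcol k.succ j.succ (Fin.succ_lt_succ_iff.mpr hjk) i.succ, Fin.succ_inj]
    · intro k i hik j
      simp only [hr', submatrix_apply,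
        hrow k.succ i.succ (Fin.succ_lt_succ_iff.mpr hik) j.succ, Fin.succ_inj]

/-- **Theorem 2.3 of Bourgade, "Conditional Haar measures on classical compact groups".**
If `r 0, …, r (n-1)` are unitary reflections (each `r k - Id` has rank at most `1`)
such that `r k` fixes the basis vectors `e j` for `j < k`, then
`det (Id - r 0 * ⋯ * r (n-1)) = ∏ k, (1 - (r k) k k)`. -/
theorem det_one_sub_prod_reflections (n : ℕ) (hn : 1 ≤ n)
    (r : Fin n → Matrix (Fin n) (Fin n) ℂ)
    (hunit : ∀ k, r k ∈ Matrix.unitaryGroup (Fin n) ℂ)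
    (hrank : ∀ k, Matrix.rank (r k - 1) ≤ 1)
    (hfix : ∀ k j : Fin n, j < k → ∀ i : Fin n, r k i j = if i = j then 1 else 0) :
    Matrix.det (1 - ((List.finRange n).map r).prod) = ∏ k : Fin n, (1 - r k k k) := by
  have hrow : ∀ k i : Fin n, i < k → ∀ j, r k i j = if j = i then 1 else 0 := by
    intro k i hik j
    have h1 : star (r k) * r k = 1 := mem_unitaryGroup_iff'.mp (hunit k)
    have h2 := congrFun (congrFun h1 i) j
    rw [Matrix.mul_apply] at h2
    have hst : ∀ l, star (r k) i l = if l = i then (1:ℂ) else 0 := by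
      intro l
      rw [Matrix.star_apply, hfix k i hik l]
      simp [apply_ite (star : ℂ → ℂ)]
    rw [Finset.sum_congr rfl (fun l _ => by rw [hst l])] at h2
    simp only [ite_mul, one_mul, zero_mul, Finset.sum_ite_eq' Finset.univ,
      Finset.mem_univ, if_true] at h2
    rw [h2, Matrix.one_apply]
    simp [eq_comm]
  have hrk : ∀ k, ∃ x y : Fin n → ℂ, ∀ i j,
      r k i j = (if i = j then (1:ℂ) else 0) + x i * y j := by
    intro k
    obtain ⟨x, y, hxy⟩ := rank_le_one_decomp (r k - 1) (hrank k)
    refine ⟨x, y, fun i j => ?_⟩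
    have := hxy i j
    simp only [Matrix.sub_apply, Matrix.one_apply] at this
    rw [← this]; ring
  exact aux n r hrk hfix hrow
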